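/- If semi-naive evaluation reaches a fixpoint at iteration N (i.e., S_{N+1} = S_N), then S_N equals the least fixpoint of the immediate-consequence operator, i.e., the set of all facts admitting a finite derivation tree. -/
import Mathlib


/-- Derivation trees of bounded height (see the context). -/
inductive Deriv {F : Type} (base : Set F) (rule : Finset F → Finset F → F → Prop) :
    F → ℕ → Prop
  | step (bp rp : Finset F) (c : F) (h : ℕ) :
      rule bp rp c → ↑bp ⊆ base →
      (∀ p ∈ rp, Deriv base rule p h) → Deriv base rule c (h + 1)
  | mono (a : F) (h : ℕ) : Deriv base rule a h → Deriv base rule a (h + 1)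

/-- The immediate-consequence operator `T`. -/
def immCons {F : Type} (base : Set F) (rule : Finset F → Finset F → F → Prop)
    (S : Set F) : Set F :=
  S ∪ {c | ∃ bp rp : Finset F, rule bp rp c ∧ ↑bp ⊆ base ∧ ↑rp ⊆ S}

/-- Semi-naive evaluation: `S 0 = ∅`, `S (i+1) = T (S i)`. -/
def semiNaive {F : Type} (base : Set F) (rule : Finset F → Finset F → F → Prop) :
    ℕ → Set F
  | 0 => ∅
  | i + 1 => immCons base rule (semiNaive base rule i)

lemma semiNaive_deriv {F : Type} (base : Set F) (rule : Finset F → Finset F → F → Prop) :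
    ∀ i a, a ∈ semiNaive base rule i → Deriv base rule a i := by
  intro i
  induction i with
  | zero => intro a ha; exact absurd ha (by simp [semiNaive])
  | succ i ih =>
    intro a ha
    rcases ha with ha | ⟨bp, rp, hr, hb, hs⟩
    · exact Deriv.mono a i (ih a ha)
    · exact Deriv.step bp rp a i hr hb (fun p hp => ih p (hs hp))

lemma deriv_mem_fixpoint {F : Type} {base : Set F} {rule : Finset F → Finset F → F → Prop}
    {S : Set F} (hS : immCons base rule S = S) :
    ∀ {a h}, Deriv base rule a h → a ∈ S := by
  intro a h hd
  induction hd with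
  | step bp rp c h hr hb _ ih =>
    have : c ∈ immCons base rule S := Or.inr ⟨bp, rp, hr, hb, fun p hp => ih p hp⟩
    rwa [hS] at this
  | mono a h _ ih => exact ih

lemma semiNaive_le_fixpoint {F : Type} {base : Set F} {rule : Finset F → Finset F → F → Prop}
    {S : Set F} (hS : immCons base rule S = S) :
    ∀ i, semiNaive base rule i ⊆ S := by
  intro i
  induction i with
  | zero => simp [semiNaive]
  | succ i ih =>
    intro a ha
    rcases ha with ha | ⟨bp, rp, hr, hb, hs⟩
    · exact ih ha
    · have : a ∈ immCons base rule S := Or.inr ⟨bp, rp, hr, hb, fun p hp => ih (hs hp)⟩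
      rwa [hS] at this

/-- if semi-naive evaluation reaches a fixpoint at iteration `N`,
then `S N` equals the set of all facts admitting a finite derivation tree, is a
fixpoint of `T`, and is contained in every fixpoint of `T` (least fixpoint). -/
theorem semiNaive_fixpoint_is_lfp {F : Type} (base : Set F)
    (rule : Finset F → Finset F → F → Prop) (N : ℕ)
    (hfix : semiNaive base rule (N + 1) = semiNaive base rule N) :
    semiNaive base rule N = {a | ∃ h, Deriv base rule a h} ∧
    immCons base rule (semiNaive base rule N) = semiNaive base rule N ∧
    ∀ S : Set F, immCons base rule S = S → semiNaive base rule N ⊆ S := by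
  have hfp : immCons base rule (semiNaive base rule N) = semiNaive base rule N := hfix
  refine ⟨?_, hfp, fun S hS => semiNaive_le_fixpoint hS N⟩
  apply Set.Subset.antisymm
  · intro a ha; exact ⟨N, semiNaive_deriv base rule N a ha⟩
  · rintro a ⟨h, hd⟩; exact deriv_mem_fixpoint hfp hd
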